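/- arXiv:2205.06837 — 3 statements merged into one kernel-verified Lean document; each statement's English description precedes it below -/
import Mathlib

section
/- In the set-cover reduction graph G, the graph distance from every element vertex σ_i to the central vertex c equals 3. -/
/-- Vertices of the set-cover reduction graph: a center `c`, element vertices `σᵢ`,
and two vertices `γ⁺ⱼ`, `γ⁻ⱼ` for each subset `Γⱼ`. -/
inductive SCVertex (p q : ℕ) : Type
  | center : SCVertex p q
  | elem : Fin p → SCVertex p q
  | plus : Fin q → SCVertex p q
  | minus : Fin q → SCVertex p q
  deriving DecidableEq, Fintype

/-- Base relation generating the edges of the reduction graph: `{σᵢ, γ⁻ⱼ}` whenever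
`σᵢ ∈ Γⱼ`, `{γ⁻ⱼ, γ⁺ⱼ}` for every `j`, and `{γ⁺ⱼ, c}` for every `j`. -/
def scRel {p q : ℕ} (Γ : Fin q → Finset (Fin p)) : SCVertex p q → SCVertex p q → Prop
  | .elem i, .minus j => i ∈ Γ j
  | .minus j, .plus j' => j = j'
  | .plus _, .center => True
  | _, _ => False

/-- The set-cover reduction graph `G`. -/
def scGraph {p q : ℕ} (Γ : Fin q → Finset (Fin p)) : SimpleGraph (SCVertex p q) :=
  SimpleGraph.fromRel (scRel Γ)


private lemma scWalk_len {p q : ℕ} (Γ : Fin q → Finset (Fin p))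
    (i : Fin p) (w : (scGraph Γ).Walk (.elem i) .center) : 3 ≤ w.length := by
  by_contra hlt
  push_neg at hlt
  cases w with
  | cons h rest =>
    rename_i x
    cases rest with
    | nil =>
      cases h with | _ hne h => cases h with
        | inl h => cases h
        | inr h => cases h
    | cons h2 rest2 =>
      cases rest2 with
      | nil =>
        cases x <;>
          first
          | (cases h with | _ hne hh => cases hh with | inl h => cases h | inr h => cases h)
          | (cases h2 with | _ hne hh => cases hh with | inl h => cases h | inr h => cases h)
      | cons h3 rest3 =>
        simp at hlt
        omega

/-- In the set-cover reduction graph `G`, the graph distance from every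
element vertex `σᵢ` to the central vertex `c` equals `3`. -/
theorem stmt_1 {p q : ℕ} (hp : 1 ≤ p) (hq : 1 ≤ q) (Γ : Fin q → Finset (Fin p))
    (hcov : ∀ i : Fin p, ∃ j : Fin q, i ∈ Γ j) (i : Fin p) :
    (scGraph Γ).dist (SCVertex.elem i) SCVertex.center = 3 := by
  obtain ⟨j, hj⟩ := hcov i
  have h1 : (scGraph Γ).Adj (.elem i) (.minus j) := ⟨by simp, Or.inl hj⟩
  have h2 : (scGraph Γ).Adj (.minus j) (.plus j) := ⟨by simp, Or.inl rfl⟩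
  have h3 : (scGraph Γ).Adj (.plus j) (.center) := ⟨by simp, Or.inl trivial⟩
  let w : (scGraph Γ).Walk (.elem i) .center :=
    .cons h1 (.cons h2 (.cons h3 .nil))
  have hr : (scGraph Γ).Reachable (.elem i) .center := ⟨w⟩
  have hle : (scGraph Γ).dist (.elem i) .center ≤ 3 := SimpleGraph.dist_le w
  obtain ⟨p', hp'⟩ := hr.exists_walk_length_eq_dist
  have hge := scWalk_len Γ i p'
  omega
end

section
/- In the set-cover reduction graph G with source set S = {σ₁,…,σ_p}, destination set T = {c}, and penalty τ = 1.99, for every nonempty index set J ⊆ {1,…,q} the peer set U = {c} ∪ {γ⁻_j : j ∈ J} has adversarial advantage A_G(U) = |{i : σ_i ∈ ⋃_{j∈J} Γ_j}|, the number of elements covered by the subsets indexed by J. (Since all distances in G are integers and τ = 1.99, the condition d_U(s,t) + τ < d(s,t) is equivalent to d_U(s,t) ≤ d(s,t) − 2 and the ½-weighted tie term never contributes.) -/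
open scoped Classical

/-- Shortcut distance through the adversary node, joined by zero-weight links to all
nodes of the peer set `U`: `d_U(s,t) = min_{u, u' ∈ U} (d(s,u) + d(u',t))`. -/
noncomputable def shortcutDist {V : Type*} (G : SimpleGraph V) (U : Finset V) (s t : V) : ℕ :=
  sInf {n : ℕ | ∃ u ∈ U, ∃ u' ∈ U, n = G.dist s u + G.dist u' t}

/-- Adversarial advantage
`A_N(U) = ∑_{s ∈ S, t ∈ T} (1[d_U(s,t) + τ < d(s,t)] + ½·1[d_U(s,t) + τ = d(s,t)])`. -/
noncomputable def advantage {V : Type*} (G : SimpleGraph V) (S T U : Finset V) (τ : ℝ) : ℝ :=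
  ∑ s ∈ S, ∑ t ∈ T,
    ((if (shortcutDist G U s t : ℝ) + τ < (G.dist s t : ℝ) then (1 : ℝ) else 0)
      + (1 / 2) * (if (shortcutDist G U s t : ℝ) + τ = (G.dist s t : ℝ) then (1 : ℝ) else 0))

/-- The source set `S = {σ₁, …, σ_p}`. -/
def scSources (p q : ℕ) : Finset (SCVertex p q) :=
  Finset.univ.image SCVertex.elem

/-- The destination set `T = {c}`. -/
def scDests (p q : ℕ) : Finset (SCVertex p q) :=
  {SCVertex.center}

/-
Proof idea: in `G` every element vertex is at distance exactly 3 from `c`, since any path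
must climb through one `γ⁻` and one `γ⁺`. If `σᵢ ∈ Γⱼ` for some `j ∈ J`, the shortcut
`σᵢ → γ⁻ⱼ ⇝ c` has length 1, a gain of 2 > τ. If `σᵢ` is not covered by `J`, then every vertex
of `U` is still at distance at least 3 from `σᵢ`, so there is no gain. The lower bounds on
distances come from integer potentials that change by at most one along each edge.
-/

namespace SimpleGraph

variable {V : Type*} {G : SimpleGraph V}

lemma Walk.sub_le_length_of_adj (φ : V → ℤ) (hφ : ∀ a b, G.Adj a b → φ b - φ a ≤ 1)
    {x y : V} (w : G.Walk x y) : φ y - φ x ≤ w.length := by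
  induction w with
  | nil => simp
  | cons h w ih =>
    have := hφ _ _ h
    rw [Walk.length_cons]
    push_cast
    omega

lemma Reachable.sub_le_dist_of_adj (φ : V → ℤ) (hφ : ∀ a b, G.Adj a b → φ b - φ a ≤ 1)
    {x y : V} (h : G.Reachable x y) : φ y - φ x ≤ G.dist x y := by
  obtain ⟨w, hw⟩ := h.exists_walk_length_eq_dist
  simpa [hw] using w.sub_le_length_of_adj φ hφ

end SimpleGraph

section Shortcut

variable {V : Type*} {G : SimpleGraph V} {U : Finset V} {s t : V}

lemma shortcutDist_le {u u' : V} (hu : u ∈ U) (hu' : u' ∈ U) :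
    shortcutDist G U s t ≤ G.dist s u + G.dist u' t :=
  Nat.sInf_le ⟨u, hu, u', hu', rfl⟩

lemma le_shortcutDist {n : ℕ} (hU : U.Nonempty)
    (h : ∀ u ∈ U, ∀ u' ∈ U, n ≤ G.dist s u + G.dist u' t) : n ≤ shortcutDist G U s t := by
  obtain ⟨u, hu⟩ := hU
  refine le_csInf ⟨_, u, hu, u, hu, rfl⟩ ?_
  rintro _ ⟨u, hu, u', hu', rfl⟩
  exact h u hu u' hu'

end Shortcut

lemma advantage_summand_eq_ite {a b : ℕ} {τ : ℝ} (hτ₁ : 1 < τ) (hτ₂ : τ < 2) :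
    ((if (a : ℝ) + τ < b then (1 : ℝ) else 0) + 1 / 2 * (if (a : ℝ) + τ = b then 1 else 0))
      = if a + 2 ≤ b then 1 else 0 := by
  have htie : (a : ℝ) + τ ≠ b := by
    intro h
    rcases le_or_gt b (a + 1) with hb | hb
    · have : (b : ℝ) ≤ a + 1 := by exact_mod_cast hb
      linarith
    · have : (a : ℝ) + 2 ≤ b := by exact_mod_cast hb
      linarith
  have hlt : (a : ℝ) + τ < b ↔ a + 2 ≤ b := by
    constructor
    · intro h
      by_contra! hb
      have : (b : ℝ) ≤ a + 1 := by exact_mod_cast Nat.le_of_lt_succ hb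
      linarith
    · intro hb
      have : (a : ℝ) + 2 ≤ b := by exact_mod_cast hb
      linarith
  simp only [htie, if_false, mul_zero, add_zero, hlt]

section SetCoverGraph

open SCVertex

variable {p q : ℕ} {Γ : Fin q → Finset (Fin p)}

def scPeers (J : Finset (Fin q)) : Finset (SCVertex p q) :=
  insert center (J.image minus)

lemma mem_scPeers {J : Finset (Fin q)} {v : SCVertex p q} :
    v ∈ scPeers J ↔ v = center ∨ ∃ j ∈ J, v = minus j := by
  simp [scPeers, eq_comm]

lemma scGraph_adj_elem_minus {i : Fin p} {j : Fin q} (h : i ∈ Γ j) :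
    (scGraph Γ).Adj (elem i) (minus j) := by
  simpa [scGraph, scRel] using h

lemma scGraph_adj_minus_plus (j : Fin q) : (scGraph Γ).Adj (minus j) (plus j) := by
  simp [scGraph, scRel]

lemma scGraph_adj_plus_center (j : Fin q) : (scGraph Γ).Adj (plus j) center := by
  simp [scGraph, scRel]

lemma scGraph_reachable_center (hcov : ∀ i : Fin p, ∃ j : Fin q, i ∈ Γ j) (v : SCVertex p q) :
    (scGraph Γ).Reachable v center := by
  have hplus (j : Fin q) : (scGraph Γ).Reachable (plus j) center :=
    (scGraph_adj_plus_center j).reachable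
  have hminus (j : Fin q) : (scGraph Γ).Reachable (minus j) center :=
    (scGraph_adj_minus_plus j).reachable.trans (hplus j)
  cases v with
  | center => rfl
  | plus j => exact hplus j
  | minus j => exact hminus j
  | elem i =>
    obtain ⟨j, hj⟩ := hcov i
    exact (scGraph_adj_elem_minus hj).reachable.trans (hminus j)

lemma scGraph_connected (hcov : ∀ i : Fin p, ∃ j : Fin q, i ∈ Γ j) : (scGraph Γ).Connected :=
  haveI : Nonempty (SCVertex p q) := ⟨center⟩
  .mk fun u v => (scGraph_reachable_center hcov u).trans (scGraph_reachable_center hcov v).symm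

lemma scGraph_sub_le_dist (φ : SCVertex p q → ℤ) (hφ : ∀ a b, scRel Γ a b → |φ a - φ b| ≤ 1)
    {x y : SCVertex p q} (h : (scGraph Γ).Reachable x y) : φ y - φ x ≤ (scGraph Γ).dist x y := by
  refine h.sub_le_dist_of_adj φ fun a b hab => ?_
  rw [scGraph, SimpleGraph.fromRel_adj] at hab
  obtain ⟨-, hab | hab⟩ := hab
  all_goals have := abs_le.mp (hφ _ _ hab); omega

lemma scGraph_three_le_dist_of_notMem_biUnion (hcov : ∀ i : Fin p, ∃ j : Fin q, i ∈ Γ j)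
    {J : Finset (Fin q)} {i : Fin p} (hi : i ∉ J.biUnion Γ) {u : SCVertex p q}
    (hu : u ∈ scPeers J) : 3 ≤ (scGraph Γ).dist (elem i) u := by
  -- Elements covered by `J` sit at level 2, so the `γ⁻ⱼ` with `j ∈ J` can sit at level 3.
  let φ : SCVertex p q → ℤ
    | center => 3
    | plus _ => 2
    | minus j => if j ∈ J then 3 else 1
    | elem i' => if i' ∈ J.biUnion Γ then 2 else if i' = i then 0 else 1
  have hφ : ∀ a b, scRel Γ a b → |φ a - φ b| ≤ 1 := by
    intro a b hab
    cases a <;> cases b <;> simp only [scRel] at hab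
    case elem.minus i' j =>
      by_cases hj : j ∈ J
      · have hi' : i' ∈ J.biUnion Γ := Finset.mem_biUnion.mpr ⟨j, hj, hab⟩
        simp only [φ, if_pos hi', if_pos hj]
        norm_num
      · simp only [φ, if_neg hj]
        split_ifs <;> norm_num
    case minus.plus => simp only [φ]; split_ifs <;> norm_num
    case plus.center => simp [φ]
  have hφu : φ u = 3 := by
    rcases mem_scPeers.mp hu with rfl | ⟨j, hj, rfl⟩
    · rfl
    · simp [φ, hj]
  have := scGraph_sub_le_dist φ hφ ((scGraph_connected hcov).preconnected (elem i) u)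
  have hφi : φ (elem i) = 0 := by simp only [φ, if_neg hi, if_true]
  rw [hφu, hφi] at this
  omega

lemma scGraph_dist_elem_center (hcov : ∀ i : Fin p, ∃ j : Fin q, i ∈ Γ j) (i : Fin p) :
    (scGraph Γ).dist (elem i) center = 3 := by
  obtain ⟨j, hj⟩ := hcov i
  refine le_antisymm ?_ ?_
  · simpa using (scGraph Γ).dist_le <| .cons (scGraph_adj_elem_minus hj) <|
      .cons (scGraph_adj_minus_plus j) <| .cons (scGraph_adj_plus_center j) .nil
  · exact scGraph_three_le_dist_of_notMem_biUnion hcov (J := ∅) (by simp)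
      (mem_scPeers.mpr (.inl rfl))

lemma shortcutDist_scPeers_add_two_le_dist_iff (hcov : ∀ i : Fin p, ∃ j : Fin q, i ∈ Γ j)
    {J : Finset (Fin q)} {i : Fin p} :
    shortcutDist (scGraph Γ) (scPeers J) (elem i) center + 2 ≤ (scGraph Γ).dist (elem i) center
      ↔ i ∈ J.biUnion Γ := by
  rw [scGraph_dist_elem_center hcov]
  constructor
  · intro h
    by_contra hi
    have : 3 ≤ shortcutDist (scGraph Γ) (scPeers J) (elem i) center :=
      le_shortcutDist ⟨center, mem_scPeers.mpr (.inl rfl)⟩ fun u hu _ _ =>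
        (scGraph_three_le_dist_of_notMem_biUnion hcov hi hu).trans (Nat.le_add_right _ _)
    omega
  · intro hi
    obtain ⟨j, hj, hij⟩ := Finset.mem_biUnion.mp hi
    have := shortcutDist_le (G := scGraph Γ) (s := elem i) (t := center)
      (mem_scPeers.mpr (.inr ⟨j, hj, rfl⟩)) (mem_scPeers.mpr (.inl rfl))
    rw [SimpleGraph.dist_eq_one_iff_adj.mpr (scGraph_adj_elem_minus hij),
      SimpleGraph.dist_self] at this
    omega

end SetCoverGraph

theorem stmt_2_general {p q : ℕ} (Γ : Fin q → Finset (Fin p))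
    (hcov : ∀ i : Fin p, ∃ j : Fin q, i ∈ Γ j)
    (J : Finset (Fin q)) :
    advantage (scGraph Γ) (scSources p q) (scDests p q)
        (insert SCVertex.center (J.image SCVertex.minus)) (1.99 : ℝ)
      = ((J.biUnion Γ).card : ℝ) := by
  change advantage _ _ _ (scPeers J) _ = _
  rw [advantage, scDests, scSources, Finset.sum_image fun _ _ _ _ h => SCVertex.elem.inj h]
  simp_rw [Finset.sum_singleton, advantage_summand_eq_ite (by norm_num : (1 : ℝ) < 1.99)
    (by norm_num), shortcutDist_scPeers_add_two_le_dist_iff hcov]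
  rw [Finset.sum_boole, Finset.filter_mem_eq_inter, Finset.univ_inter]

/-- In the set-cover reduction graph with `S = {σ₁,…,σ_p}`, `T = {c}` and
penalty `τ = 1.99`, for every nonempty `J ⊆ {1,…,q}` the peer set
`U = {c} ∪ {γ⁻ⱼ : j ∈ J}` has adversarial advantage equal to the number of elements covered
by the subsets indexed by `J`, i.e. `A_G(U) = |⋃_{j ∈ J} Γⱼ|`. -/
theorem stmt_2 {p q : ℕ} (hp : 1 ≤ p) (hq : 1 ≤ q) (Γ : Fin q → Finset (Fin p))
    (hcov : ∀ i : Fin p, ∃ j : Fin q, i ∈ Γ j)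
    (J : Finset (Fin q)) (hJ : J.Nonempty) :
    advantage (scGraph Γ) (scSources p q) (scDests p q)
        (insert SCVertex.center (J.image SCVertex.minus)) (1.99 : ℝ)
      = ((J.biUnion Γ).card : ℝ) :=
  stmt_2_general Γ hcov J
end

section
/- There exists a constant C > 0 such that for every real k ≥ 1, e^{−2k} · ∑_{i=0}^{⌊k⌋} (2k)^i / i! ≤ C / k. -/
private lemma stmt6_aux1 : ∀ (n : ℕ) (x : ℝ), 2 * (n : ℝ) ≤ x → ∀ i, i ≤ n →
    (2:ℝ) ^ (n - i) * x ^ i * (Nat.factorial n : ℝ) ≤ x ^ n * (Nat.factorial i : ℝ) := by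
  intro n
  induction n with
  | zero =>
    intro x hx i hi
    interval_cases i
    simp
  | succ n IH =>
    intro x hx i hi
    have hxn : (0:ℝ) ≤ (n:ℝ) + 1 := by positivity
    have hx' : 2 * (n : ℝ) ≤ x := by
      push_cast at hx ⊢; linarith
    have hx0 : (0:ℝ) ≤ x := le_trans (by positivity) hx'
    rcases Nat.lt_succ_iff_lt_or_eq.mp (Nat.lt_succ_of_le hi) with h | h
    · have hn : i ≤ n := Nat.lt_succ_iff.mp h
      have key := IH x hx' i hn
      have hsub : n + 1 - i = (n - i) + 1 := by omega
      rw [hsub, pow_succ, Nat.factorial_succ]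
      push_cast
      push_cast at hx
      have h2 : (2:ℝ) * ((n:ℝ)+1) ≤ x := by linarith
      have hp : (0:ℝ) ≤ (2:ℝ) ^ (n - i) * x ^ i * (Nat.factorial n : ℝ) := by positivity
      calc (2:ℝ) ^ (n-i) * 2 * x ^ i * (((n:ℝ)+1) * (Nat.factorial n : ℝ))
          = (2 * ((n:ℝ)+1)) * ((2:ℝ) ^ (n-i) * x ^ i * (Nat.factorial n : ℝ)) := by ring
        _ ≤ x * (x ^ n * (Nat.factorial i : ℝ)) := by
            apply mul_le_mul h2 key hp hx0
        _ = x ^ (n+1) * (Nat.factorial i : ℝ) := by ring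
    · subst h
      simp

private lemma stmt6_aux2 : ∀ (d n : ℕ) (x : ℝ), 0 ≤ x → n + d ≤ 2 * n → 2 * (n : ℝ) ≤ x →
    x ^ n * (Nat.factorial (n + d) : ℝ) ≤ x ^ (n + d) * (Nat.factorial n : ℝ) := by
  intro d
  induction d with
  | zero => intro n x _ _ _; simp
  | succ d IH =>
    intro n x hx0 hdn hx
    have h1 : n + d ≤ 2 * n := by omega
    have key := IH n x hx0 h1 hx
    have hle : ((n:ℝ) + d + 1) ≤ x := by
      have : (n + d + 1 : ℕ) ≤ 2 * n := by omega
      have := (Nat.cast_le (α := ℝ)).mpr this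
      push_cast at this
      linarith
    have hstep : n + (d + 1) = (n + d) + 1 := by omega
    rw [hstep, Nat.factorial_succ, pow_succ]
    push_cast
    have hp : (0:ℝ) ≤ x ^ n * (Nat.factorial (n + d) : ℝ) := by positivity
    calc x ^ n * (((n:ℝ) + d + 1) * (Nat.factorial (n+d) : ℝ))
        = ((n:ℝ) + d + 1) * (x ^ n * (Nat.factorial (n+d) : ℝ)) := by ring
      _ ≤ x * (x ^ (n+d) * (Nat.factorial n : ℝ)) := by
          apply mul_le_mul hle key hp (le_trans (by positivity) hle)
      _ = x ^ (n+d) * x * (Nat.factorial n : ℝ) := by ring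

/-- There exists `C > 0` such that for every real `k ≥ 1`,
`e^{−2k} · ∑_{i=0}^{⌊k⌋} (2k)^i / i! ≤ C / k`. -/
theorem stmt_6 :
    ∃ C : ℝ, 0 < C ∧ ∀ k : ℝ, 1 ≤ k →
      Real.exp (-(2 * k)) * ∑ i ∈ Finset.range (⌊k⌋₊ + 1), (2 * k) ^ i / (i.factorial : ℝ)
        ≤ C / k := by
  refine ⟨2, by norm_num, ?_⟩
  intro k hk
  set n := ⌊k⌋₊ with hn
  have hk0 : (0:ℝ) ≤ k := by linarith
  have hnk : (n:ℝ) ≤ k := Nat.floor_le hk0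
  have hkn : k < (n:ℝ) + 1 := Nat.lt_floor_add_one k
  have hn1 : 1 ≤ n := Nat.le_floor (by exact_mod_cast hk)
  set x := 2 * k with hxdef
  have hx : 2 * (n:ℝ) ≤ x := by simp only [hxdef]; linarith
  have hxpos : 0 < x := by simp only [hxdef]; linarith
  have hx0 : (0:ℝ) ≤ x := le_of_lt hxpos
  have hfn : (0:ℝ) < (Nat.factorial n : ℝ) := by
    exact_mod_cast Nat.factorial_pos n
  set T : ℝ := x ^ n / (Nat.factorial n : ℝ) with hT
  have hTpos : 0 < T := by positivity
  set S : ℝ := ∑ i ∈ Finset.range (n + 1), x ^ i / (Nat.factorial i : ℝ) with hS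
  -- Step 1 : S ≤ 2 * T
  have hS2T : S ≤ 2 * T := by
    have hterm : ∀ i ∈ Finset.range (n + 1),
        x ^ i / (Nat.factorial i : ℝ) ≤ (1/2 : ℝ) ^ (n - i) * T := by
      intro i hi
      have hi' : i ≤ n := Nat.lt_succ_iff.mp (Finset.mem_range.mp hi)
      have key := stmt6_aux1 n x hx i hi'
      have hfi : (0:ℝ) < (Nat.factorial i : ℝ) := by
        exact_mod_cast Nat.factorial_pos i
      have eR : (1/2 : ℝ) ^ (n - i) * T = x ^ n / ((2:ℝ) ^ (n-i) * (Nat.factorial n : ℝ)) := by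
        rw [hT, div_pow, one_pow, div_mul_div_comm, one_mul]
      rw [eR, div_le_div_iff₀ hfi (by positivity)]
      calc x ^ i * ((2:ℝ) ^ (n-i) * (Nat.factorial n : ℝ))
          = (2:ℝ) ^ (n-i) * x ^ i * (Nat.factorial n : ℝ) := by ring
        _ ≤ x ^ n * (Nat.factorial i : ℝ) := key
    calc S ≤ ∑ i ∈ Finset.range (n + 1), (1/2 : ℝ) ^ (n - i) * T :=
          Finset.sum_le_sum hterm
      _ = (∑ i ∈ Finset.range (n + 1), (1/2 : ℝ) ^ (n - i)) * T := by
          rw [Finset.sum_mul]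
      _ = (∑ i ∈ Finset.range (n + 1), (1/2 : ℝ) ^ i) * T := by
          have hreflect := Finset.sum_range_reflect (fun j => (1/2 : ℝ) ^ j) (n+1)
          simp only [Nat.add_sub_cancel] at hreflect
          rw [hreflect]
      _ ≤ 2 * T := by
          apply mul_le_mul_of_nonneg_right (sum_geometric_two_le (n+1)) (le_of_lt hTpos)
  -- Step 2 : (n+1) * T ≤ exp x
  have hTexp : ((n:ℝ) + 1) * T ≤ Real.exp x := by
    have hsub : ∀ i ∈ Finset.Icc n (2 * n), T ≤ x ^ i / (Nat.factorial i : ℝ) := by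
      intro i hi
      rw [Finset.mem_Icc] at hi
      obtain ⟨h1, h2⟩ := hi
      have hd : n + (i - n) = i := by omega
      have key := stmt6_aux2 (i - n) n x hx0 (by omega) hx
      rw [hd] at key
      have hfi : (0:ℝ) < (Nat.factorial i : ℝ) := by
        exact_mod_cast Nat.factorial_pos i
      rw [hT, div_le_div_iff₀ hfn hfi]
      linarith [key]
    have hcard : (Finset.Icc n (2 * n)).card = n + 1 := by
      rw [Nat.card_Icc]; omega
    have hlow : ((n:ℝ) + 1) * T ≤ ∑ i ∈ Finset.Icc n (2 * n), x ^ i / (Nat.factorial i : ℝ) := by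
      have := Finset.card_nsmul_le_sum (Finset.Icc n (2 * n))
        (fun i => x ^ i / (Nat.factorial i : ℝ)) T hsub
      rw [hcard] at this
      simpa [nsmul_eq_mul, add_comm] using this
    have hup : ∑ i ∈ Finset.Icc n (2 * n), x ^ i / (Nat.factorial i : ℝ)
        ≤ ∑ i ∈ Finset.range (2 * n + 1), x ^ i / (Nat.factorial i : ℝ) := by
      apply Finset.sum_le_sum_of_subset_of_nonneg
      · intro i hi
        rw [Finset.mem_Icc] at hi
        exact Finset.mem_range.mpr (by omega)
      · intro i _ _
        positivity
    have hexp : ∑ i ∈ Finset.range (2 * n + 1), x ^ i / (Nat.factorial i : ℝ) ≤ Real.exp x :=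
      Real.sum_le_exp_of_nonneg hx0 (2 * n + 1)
    linarith
  -- Assemble
  have hkT : k * T ≤ Real.exp x := by
    have : k * T ≤ ((n:ℝ) + 1) * T := by nlinarith [hTpos]
    linarith
  have hS0 : 0 ≤ S := by
    apply Finset.sum_nonneg
    intro i _
    positivity
  have hkpos : (0:ℝ) < k := by linarith
  rw [show -(2 * k) = -x by rw [hxdef], Real.exp_neg, ← one_div,
    div_mul_eq_mul_div, div_le_div_iff₀ (Real.exp_pos x) hkpos]
  nlinarith [hS2T, hkT, Real.exp_pos x, hkpos, hTpos]
end
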